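/- arXiv:2010.04782 — 3 statements merged into one kernel-verified Lean document; each statement's English description precedes it below -/
import Mathlib

section
/- Let δ be a learning restriction that allows for simulation on equivalent text. Then every class of languages that is iteratively Ex-learnable from texts under δ is also Ex-learnable from texts under δ by a bounded memory states learner using only finitely many states on every text for a target language; that is, [ItTxtδEx] ⊆ [TxtBMS*δEx]. -/
/-!
Common framework: learning languages (c.e. subsets of ℕ) in the limit from texts,
by partial computable learners; iterative learners and bounded memory states (BMS)
learners; the usual learning restrictions.
-/

namespace BMSLearning

/-- Input alphabet `Σ = ℕ ∪ {#}`; `none` plays the role of the pause symbol `#`. -/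
abbrev Sig : Type := Option ℕ

/-- Output alphabet `Ω = ℕ ∪ {?}`; `none` plays the role of `?`. -/
abbrev Hyp : Type := Option ℕ

/-- A fixed acceptable programming system `φ`. -/
noncomputable def phi (p : ℕ) : ℕ →. ℕ :=
  Nat.Partrec.Code.eval (Denumerable.ofNat Nat.Partrec.Code p)

/-- `W p` is the domain of the `p`-th partial computable function. -/
noncomputable def W (p : ℕ) : Set ℕ := {x | (phi p x).Dom}

/-- A learner is a partial (computable) function from finite sequences over `Σ` to `Ω`. -/
abbrev Learner : Type := List Sig →. Hyp

/-- `T[t]`: the initial segment of length `t` of the text `T`. -/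
def seg (T : ℕ → Sig) (t : ℕ) : List Sig := (List.range t).map T

/-- The content of a finite sequence. -/
def cnt (σ : List Sig) : Set ℕ := {x | some x ∈ σ}

/-- The content of an infinite sequence. -/
def cntT (T : ℕ → Sig) : Set ℕ := {x | ∃ t, T t = some x}

/-- `T` is a text for `L`. -/
def IsTextFor (T : ℕ → Sig) (L : Set ℕ) : Prop := cntT T = L

/-- The learner `M` outputs the (proper) hypothesis `e ∈ ℕ` at time `t` on text `T`. -/
def outputs (M : Learner) (T : ℕ → Sig) (t : ℕ) (e : ℕ) : Prop :=
  M (seg T t) = Part.some (some e)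

/-- `M` Ex-learns `L` from the text `T`: the learning sequence is defined, and from
some point on, a correct hypothesis is output and never changed (except possibly to `?`). -/
def Ex (M : Learner) (L : Set ℕ) (T : ℕ → Sig) : Prop :=
  (∀ t, (M (seg T t)).Dom) ∧
  ∃ t₀ e, outputs M T t₀ e ∧ W e = L ∧
    ∀ t, t₀ ≤ t → ∀ h : Hyp, M (seg T t) = Part.some h → h ≠ none → h = some e

/-- `M` Ex-converges on the text `T` (syntactic convergence, no correctness demanded). -/
def ExConverges (M : Learner) (T : ℕ → Sig) : Prop :=
  ∃ t₀ h₀, M (seg T t₀) = Part.some h₀ ∧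
    ∀ t, t₀ ≤ t → ∀ h : Hyp, M (seg T t) = Part.some h → h ≠ none → h = h₀

/-- The iterated state function `s*` of a BMS learner with state transition function `sf`:
`s*(ε) = 0` and `s*(σ⌢x) = sf(s*(σ), x)`. -/
def sStar (sf : ℕ × Sig →. ℕ) (σ : List Sig) : Part ℕ :=
  σ.foldl (fun q x => q.bind fun a => sf (a, x)) (Part.some 0)

/-- The learner determined by a hypothesis generating function `hf` and a state
transition function `sf`:  `M(ε) = ?` and `M(σ⌢x) = hf(s*(σ), x)`. -/
noncomputable def bmsLearner (hf : ℕ × Sig →. Hyp) (sf : ℕ × Sig →. ℕ) : Learner :=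
  fun τ =>
    if hτ : τ = [] then Part.some (none : Hyp)
    else (sStar sf τ.dropLast).bind fun q => hf (q, τ.getLast hτ)

/-- `(hf, sf)` is an admissible presentation of a BMS learner: both functions are
partial computable and they have equal domains. -/
def BMSPair (hf : ℕ × Sig →. Hyp) (sf : ℕ × Sig →. ℕ) : Prop :=
  Partrec hf ∧ Partrec sf ∧ ∀ p : ℕ × Sig, (hf p).Dom ↔ (sf p).Dom

/-- `BMS*`: the BMS learner with state transition function `sf` uses only finitely
many states on the text `T`. -/
def StatesFin (sf : ℕ × Sig →. ℕ) (T : ℕ → Sig) : Prop :=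
  {q : ℕ | ∃ t, sStar sf (seg T t) = Part.some q}.Finite

/-- The iterative learner determined by the hypothesis generating function `hf`:
`M(ε) = ?` and `M(σ⌢x) = hf(M(σ), x)`. -/
def itLearner (hf : Hyp × Sig →. Hyp) : Learner :=
  fun τ => τ.foldl (fun q x => q.bind fun a => hf (a, x)) (Part.some (none : Hyp))

/-- `[TxtBMS*δEx]`: the classes of languages Ex-learnable from texts under the
restriction `δ` by a BMS learner using finitely many states on each text
for a language of the class. -/
def TxtBMSstarEx (δ : Learner → (ℕ → Sig) → Prop) : Set (Set (Set ℕ)) :=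
  {ℒ | ∃ hf sf, BMSPair hf sf ∧
      ∀ L ∈ ℒ, ∀ T, IsTextFor T L →
        Ex (bmsLearner hf sf) L T ∧ StatesFin sf T ∧ δ (bmsLearner hf sf) T}

/-- `[ItTxtδEx]`: the classes of languages Ex-learnable from texts under the
restriction `δ` by an iterative learner. -/
def ItTxtEx (δ : Learner → (ℕ → Sig) → Prop) : Set (Set (Set ℕ)) :=
  {ℒ | ∃ hf, Partrec hf ∧
      ∀ L ∈ ℒ, ∀ T, IsTextFor T L → Ex (itLearner hf) L T ∧ δ (itLearner hf) T}

/-! ### Learning restrictions -/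

/-- The trivial restriction `T`. -/
def Triv : Learner → (ℕ → Sig) → Prop := fun _ _ => True

/-- Conservative. -/
def Conv (M : Learner) (T : ℕ → Sig) : Prop :=
  ∀ s t, s ≤ t → ∀ es et : ℕ, outputs M T s es → outputs M T t et →
    cnt (seg T t) ⊆ W es → es = et

/-- Decisive. -/
def Dec (M : Learner) (T : ℕ → Sig) : Prop :=
  ∀ r s t, r ≤ s → s ≤ t → ∀ er es et : ℕ,
    outputs M T r er → outputs M T s es → outputs M T t et →
    W er = W et → W er = W es

/-- Cautious. -/
def Caut (M : Learner) (T : ℕ → Sig) : Prop :=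
  ∀ s t, s ≤ t → ∀ es et : ℕ, outputs M T s es → outputs M T t et →
    ¬ (W et ⊂ W es)

/-- Weakly monotonic. -/
def WMon (M : Learner) (T : ℕ → Sig) : Prop :=
  ∀ s t, s ≤ t → ∀ es et : ℕ, outputs M T s es → outputs M T t et →
    cnt (seg T t) ⊆ W es → W es ⊆ W et

/-- Monotonic. -/
def Mon (M : Learner) (T : ℕ → Sig) : Prop :=
  ∀ s t, s ≤ t → ∀ es et : ℕ, outputs M T s es → outputs M T t et →
    W es ∩ cntT T ⊆ W et ∩ cntT T

/-- Strongly monotonic. -/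
def SMon (M : Learner) (T : ℕ → Sig) : Prop :=
  ∀ s t, s ≤ t → ∀ es et : ℕ, outputs M T s es → outputs M T t et →
    W es ⊆ W et

/-- Non-U-shaped. -/
def NU (M : Learner) (T : ℕ → Sig) : Prop :=
  ∀ r s t, r ≤ s → s ≤ t → ∀ er es et : ℕ,
    outputs M T r er → outputs M T s es → outputs M T t et →
    W er = cntT T → W et = cntT T → W er = W es

/-- Strongly non-U-shaped. -/
def SNU (M : Learner) (T : ℕ → Sig) : Prop :=
  ∀ r s t, r ≤ s → s ≤ t → ∀ er et : ℕ,
    outputs M T r er → outputs M T t et →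
    W er = cntT T → W et = cntT T → M (seg T s) = Part.some (some er)

/-- Strongly decisive. -/
def SDec (M : Learner) (T : ℕ → Sig) : Prop :=
  ∀ r s t, r ≤ s → s ≤ t → ∀ er et : ℕ,
    outputs M T r er → outputs M T t et →
    W er = W et → M (seg T s) = Part.some (some er)

/-- Witness-based. -/
def Wb (M : Learner) (T : ℕ → Sig) : Prop :=
  ∀ r s t, r < s → s ≤ t → ∀ er et : ℕ,
    outputs M T r er → outputs M T t et →
    M (seg T s) ≠ Part.some (some er) →
    (cnt (seg T s) ∩ (W et \ W er)).Nonempty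

/-- A predicate on (learner, text) pairs allows for simulation on equivalent text. -/
def AFSOET (δ : Learner → (ℕ → Sig) → Prop) : Prop :=
  ∀ simu : ℕ → ℕ, Monotone simu → (∀ x, ∃ t, x ≤ simu t) →
    ∀ M M' : Learner, Partrec M → Partrec M' →
      ∀ T T' : ℕ → Sig,
        (∀ t, cnt (seg T' t) = cnt (seg T (simu t))) →
        (∀ t, M' (seg T' t) = M (seg T (simu t))) →
        δ M T → δ M' T'

/-- The hypotheses (partial values in `Ω`) `h` and `h'` are semantically equal:
both undefined, both `?`, or both proper hypotheses describing the same language. -/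
def SemEqAt (h h' : Part Hyp) : Prop :=
  (h.Dom ↔ h'.Dom) ∧ (h = Part.some (none : Hyp) ↔ h' = Part.some (none : Hyp)) ∧
  ∀ e e' : ℕ, h = Part.some (some e) → h' = Part.some (some e') → W e = W e'

/-- A restriction is semantic: it depends only on the text and the sequence of sets
described by the hypotheses. -/
def Semantic (δ : Learner → (ℕ → Sig) → Prop) : Prop :=
  ∀ M M' : Learner, Partrec M → Partrec M' → ∀ T : ℕ → Sig,
    (∀ t, SemEqAt (M (seg T t)) (M' (seg T t))) → δ M T → δ M' T

/-- `σ` is a locking sequence for `M` on `L`. -/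
def LockingSeq (M : Learner) (L : Set ℕ) (σ : List Sig) : Prop :=
  cnt σ ⊆ L ∧ (∃ e : ℕ, M σ = Part.some (some e) ∧ W e = L) ∧
    ∀ τ : List Sig, cnt τ ⊆ L → M (σ ++ τ) = M σ

/-- `M` is strongly locking on `L`. -/
def StronglyLocking (M : Learner) (L : Set ℕ) : Prop :=
  ∀ T, IsTextFor T L → ∃ t, LockingSeq M L (seg T t)

/-- The fixed computable bijection `π : ℕ → Ω` with `π 0 = ?` and `π (i+1) = i`. -/
def piFun : ℕ → Hyp
  | 0 => none
  | (i + 1) => some i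

/-- The inverse `π⁻¹ : Ω → ℕ` of `piFun`. -/
def piInv : Hyp → ℕ
  | none => 0
  | some e => e + 1

end BMSLearning

namespace BMSLearning


/-! ### Auxiliary material for STATEMENT 0 -/

lemma piFun_piInv (h : Hyp) : piFun (piInv h) = h := by cases h <;> rfl

lemma piFun_eq : piFun = fun n => Denumerable.ofNat Hyp n := by
  funext n
  cases n with
  | zero => exact (Denumerable.ofNat_of_decode (by rfl)).symm
  | succ i => exact (Denumerable.ofNat_of_decode (by rfl)).symm

lemma piInv_eq : piInv = fun h : Hyp => Encodable.encode h := by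
  funext h; cases h <;> simp [piInv]

lemma computable_piFun : Computable piFun := by
  rw [piFun_eq]; exact Computable.ofNat Hyp

lemma computable_piInv : Computable piInv := by
  rw [piInv_eq]; exact Computable.encode

/-- The state transition function obtained from an iterative learner by encoding
hypotheses as states. -/
noncomputable def sfOf (hf : Hyp × Sig →. Hyp) : ℕ × Sig →. ℕ :=
  fun p => (hf (piFun p.1, p.2)).map piInv

/-- The hypothesis generating function obtained from an iterative learner. -/
noncomputable def hbOf (hf : Hyp × Sig →. Hyp) : ℕ × Sig →. Hyp :=
  fun p => hf (piFun p.1, p.2)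

lemma partrec_hbOf {hf : Hyp × Sig →. Hyp} (h : Partrec hf) : Partrec (hbOf hf) :=
  h.comp ((computable_piFun.comp Computable.fst).pair Computable.snd)

lemma partrec_sfOf {hf : Hyp × Sig →. Hyp} (h : Partrec hf) : Partrec (sfOf hf) :=
  (partrec_hbOf h).map (computable_piInv.comp Computable.snd).to₂

lemma foldl_map (hf : Hyp × Sig →. Hyp) (σ : List Sig) (h : Part Hyp) :
    σ.foldl (fun q x => q.bind fun a => sfOf hf (a, x)) (h.map piInv)
      = (σ.foldl (fun q x => q.bind fun a => hf (a, x)) h).map piInv := by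
  induction σ generalizing h with
  | nil => rfl
  | cons x σ ih =>
    simp only [List.foldl_cons]
    rw [← ih]
    congr 1
    ext n
    simp only [sfOf, Part.mem_bind_iff, Part.mem_map_iff]
    constructor
    · rintro ⟨a, ⟨b, hb, rfl⟩, c, hc, rfl⟩
      exact ⟨c, ⟨b, hb, by rwa [piFun_piInv] at hc⟩, rfl⟩
    · rintro ⟨c, ⟨b, hb, hc⟩, rfl⟩
      exact ⟨piInv b, ⟨b, hb, rfl⟩, c, by rwa [piFun_piInv], rfl⟩

lemma sStar_eq (hf : Hyp × Sig →. Hyp) (σ : List Sig) :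
    sStar (sfOf hf) σ = (itLearner hf σ).map piInv := by
  have := foldl_map hf σ (Part.some (none : Hyp))
  simpa [sStar, itLearner, Part.map_some, piInv] using this

lemma bms_eq_it (hf : Hyp × Sig →. Hyp) :
    bmsLearner (hbOf hf) (sfOf hf) = itLearner hf := by
  funext τ
  by_cases hτ : τ = []
  · subst hτ; simp [bmsLearner, itLearner]
  · have hτ2 : τ = τ.dropLast ++ [τ.getLast hτ] := (List.dropLast_append_getLast hτ).symm
    rw [bmsLearner]
    rw [dif_neg hτ, sStar_eq]
    have hit : itLearner hf τ = (itLearner hf τ.dropLast).bind fun a => hf (a, τ.getLast hτ) := by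
      conv_lhs => rw [hτ2]
      simp [itLearner, List.foldl_append]
    rw [hit]
    show ((itLearner hf τ.dropLast).map piInv).bind _ = _
    ext n
    simp only [hbOf, Part.mem_bind_iff, Part.mem_map_iff]
    constructor
    · rintro ⟨a, ⟨b, hb, rfl⟩, hn⟩
      exact ⟨b, hb, by rwa [piFun_piInv] at hn⟩
    · rintro ⟨b, hb, hn⟩
      exact ⟨piInv b, ⟨b, hb, rfl⟩, by rwa [piFun_piInv]⟩

/-- If `δ` allows for simulation on equivalent text, then
`[ItTxtδEx] ⊆ [TxtBMS*δEx]`. -/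
theorem itTxt_subset_txtBMSstar (δ : Learner → (ℕ → Sig) → Prop) (hδ : AFSOET δ) :
    ItTxtEx δ ⊆ TxtBMSstarEx δ := by
  rintro ℒ ⟨hf, hpr, hlearn⟩
  refine ⟨hbOf hf, sfOf hf, ⟨partrec_hbOf hpr, partrec_sfOf hpr, fun p => Iff.rfl⟩, ?_⟩
  intro L hL T hT
  obtain ⟨hEx, hδ'⟩ := hlearn L hL T hT
  rw [bms_eq_it]
  refine ⟨hEx, ?_, hδ'⟩
  obtain ⟨hdom, t₀, e, hout, hWe, hconv⟩ := hEx
  set M := itLearner hf with hM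
  set f : ℕ → Hyp := fun t => (M (seg T t)).get (hdom t) with hfdef
  have hf_some : ∀ t, M (seg T t) = Part.some (f t) := fun t => (Part.some_get (hdom t)).symm
  have hsub : {q : ℕ | ∃ t, sStar (sfOf hf) (seg T t) = Part.some q}
      ⊆ ((fun t => piInv (f t)) '' Set.Iic t₀) ∪ {0, e + 1} := by
    rintro q ⟨t, ht⟩
    rw [sStar_eq, ← hM, hf_some t, Part.map_some, Part.some_inj] at ht
    rcases le_or_gt t t₀ with h | h
    · exact Or.inl ⟨t, h, ht⟩
    · right
      rcases hne : f t with _ | m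
      · left; rw [← ht, hne]; rfl
      · have := hconv t h.le (f t) (hf_some t) (by rw [hne]; exact Option.some_ne_none m)
        rw [this] at ht
        right; rw [← ht]; rfl
  exact Set.Finite.subset (((Set.finite_Iic t₀).image _).union
    ((Set.finite_singleton _).insert 0)) hsub


end BMSLearning
end

section
/- Monotonicity is restrictive for bounded memory states learning with finitely many states: [TxtBMS*MonEx] is a proper subset of [TxtBMS*Ex]. -/
/-!
The separating class consists of the even numbers `E`, the sets
`E ∩ [0, 2k] ∪ {2k+1}` and `E ∩ [0, 2k+2] ∪ {2k+1, 2k+3}`. A BMS learner that remembers only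
the least and the greatest odd number read so far identifies each of them, and uses finitely
many states on each text because such a text carries at most two odd numbers.

No monotonic learner identifies the class. Once it conjectures `E` after reading some finite
set of even numbers, extend the text to one for `E ∩ [0, 2k] ∪ {2k+1}` (with `k` large); the
learner has to change its mind to this set, and after that extend once more to a text for
`E ∩ [0, 2k+2] ∪ {2k+1, 2k+3}`: the number `2k+2` of that language was in the earlier
conjecture `E` but is not in the later one.
-/

namespace BMSLearning

section Texts

variable {T T' : ℕ → Sig} {L : Set ℕ}

lemma seg_succ (T : ℕ → Sig) (t : ℕ) : seg T (t + 1) = seg T t ++ [T t] := by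
  simp [seg, List.range_succ]

lemma seg_congr {t : ℕ} (h : ∀ n < t, T n = T' n) : seg T t = seg T' t :=
  List.map_congr_left fun n hn => h n (List.mem_range.1 hn)

lemma finite_cnt (σ : List Sig) : (cnt σ).Finite :=
  σ.finite_toSet.preimage (Option.some_injective _).injOn

lemma mem_cnt_seg {t x : ℕ} : x ∈ cnt (seg T t) ↔ ∃ n < t, T n = some x := by
  simp [cnt, seg]

lemma cnt_seg_mono {s t : ℕ} (h : s ≤ t) : cnt (seg T s) ⊆ cnt (seg T t) := by
  intro x hx
  obtain ⟨n, hn, hTn⟩ := mem_cnt_seg.1 hx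
  exact mem_cnt_seg.2 ⟨n, by omega, hTn⟩

lemma IsTextFor.cnt_seg_subset (hT : IsTextFor T L) (t : ℕ) : cnt (seg T t) ⊆ L := by
  intro x hx
  obtain ⟨n, -, hTn⟩ := mem_cnt_seg.1 hx
  exact hT ▸ ⟨n, hTn⟩

lemma IsTextFor.exists_subset_cnt_seg (hT : IsTextFor T L) {F : Set ℕ} (hF : F.Finite)
    (hFL : F ⊆ L) : ∃ t, F ⊆ cnt (seg T t) := by
  induction F, hF using Set.Finite.induction_on with
  | empty => exact ⟨0, Set.empty_subset _⟩
  | @insert x F _ _ ih =>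
    obtain ⟨t, ht⟩ := ih ((Set.subset_insert x F).trans hFL)
    obtain ⟨n, hn⟩ : x ∈ cntT T := hT ▸ hFL (Set.mem_insert x F)
    refine ⟨max t (n + 1), Set.insert_subset ?_ (ht.trans (cnt_seg_mono (le_max_left _ _)))⟩
    exact mem_cnt_seg.2 ⟨n, by omega, hn⟩

open Classical in
noncomputable def canonicalText (L : Set ℕ) : ℕ → Sig := fun n => if n ∈ L then some n else none

lemma isTextFor_canonicalText (L : Set ℕ) : IsTextFor (canonicalText L) L := by
  ext x
  simp only [cntT, canonicalText, Set.mem_ofPred_eq]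
  constructor
  · rintro ⟨n, hn⟩
    split_ifs at hn with h
    · exact Option.some_inj.1 hn ▸ h
  · exact fun hx => ⟨x, if_pos hx⟩

def splice (T : ℕ → Sig) (t : ℕ) (T' : ℕ → Sig) : ℕ → Sig :=
  fun n => if n < t then T n else T' (n - t)

lemma seg_splice_of_le {s t : ℕ} (h : s ≤ t) : seg (splice T t T') s = seg T s :=
  seg_congr fun n hn => if_pos (by omega)

lemma isTextFor_splice {t : ℕ} (hT' : IsTextFor T' L) (hT : cnt (seg T t) ⊆ L) :
    IsTextFor (splice T t T') L := by
  ext x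
  constructor
  · rintro ⟨n, hn⟩
    unfold splice at hn
    split_ifs at hn with h
    · exact hT (mem_cnt_seg.2 ⟨n, h, hn⟩)
    · exact hT' ▸ ⟨n - t, hn⟩
  · intro hx
    obtain ⟨n, hn⟩ : x ∈ cntT T' := hT' ▸ hx
    exact ⟨n + t, by simp [splice, hn]⟩

end Texts

theorem not_forall_ex_and_mon {M : Learner} {ℒ : Set (Set ℕ)} {L₀ : Set ℕ} (hL₀ : L₀ ∈ ℒ)
    (hsep : ∀ D : Set ℕ, D.Finite → D ⊆ L₀ → ∃ L₁ ∈ ℒ, ∃ L₂ ∈ ℒ,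
      D ⊆ L₁ ∧ L₁ ⊆ L₂ ∧ ¬ L₁ ⊆ L₀ ∧ ¬ L₀ ∩ L₂ ⊆ L₁) :
    ¬ ∀ L ∈ ℒ, ∀ T, IsTextFor T L → Ex M L T ∧ Mon M T := by
  intro hM
  set T₀ := canonicalText L₀
  obtain ⟨-, s, e₀, hs, hW₀, -⟩ := (hM L₀ hL₀ T₀ (isTextFor_canonicalText L₀)).1
  obtain ⟨L₁, hL₁, L₂, hL₂, hD, h₁₂, h₁₀, h₀₂⟩ :=
    hsep _ (finite_cnt _) ((isTextFor_canonicalText L₀).cnt_seg_subset s)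
  set T₁ := splice T₀ s (canonicalText L₁)
  have hT₁ : IsTextFor T₁ L₁ := isTextFor_splice (isTextFor_canonicalText L₁) hD
  have hseg₁ : seg T₁ s = seg T₀ s := seg_splice_of_le le_rfl
  obtain ⟨-, t, e₁, ht, hW₁, hconv⟩ := (hM L₁ hL₁ T₁ hT₁).1
  rcases lt_or_ge t s with hts | hst
  · -- the learner has already settled on `L₁` when it outputs `e₀` on `T₀[s] = T₁[s]`
    have : some e₀ = some e₁ := hconv s hts.le _ (hseg₁ ▸ hs) (Option.some_ne_none _)
    exact h₁₀ (by rw [← hW₀, Option.some_inj.1 this, hW₁])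
  · set T₂ := splice T₁ t (canonicalText L₂)
    have hT₂ : IsTextFor T₂ L₂ :=
      isTextFor_splice (isTextFor_canonicalText L₂) ((hT₁.cnt_seg_subset t).trans h₁₂)
    have hs₂ : outputs M T₂ s e₀ := by
      rw [outputs, seg_splice_of_le hst, hseg₁]; exact hs
    have ht₂ : outputs M T₂ t e₁ := by
      rw [outputs, seg_splice_of_le le_rfl]; exact ht
    have hmon := (hM L₂ hL₂ T₂ hT₂).2 s t hst e₀ e₁ hs₂ ht₂
    rw [hW₀, hW₁, hT₂] at hmon
    exact h₀₂ fun x hx => (hmon hx).1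

section StateMachine

open Encodable

variable {S : Type} [Primcodable S] (δ : S → Sig → S) (hyp : S → ℕ)

def machineState : ℕ × Sig →. ℕ :=
  fun p => ((decode (α := S) p.1).map fun s => encode (δ s p.2) : Option ℕ)

def machineHyp : ℕ × Sig →. Hyp :=
  fun p => ((decode (α := S) p.1).map fun s => some (hyp (δ s p.2)) : Option Hyp)

variable {δ hyp}

lemma bmsPair_machine (hδ : Computable₂ δ) (hhyp : Computable hyp) :
    BMSPair (machineHyp δ hyp) (machineState δ) := by
  refine ⟨?_, ?_, fun p => by simp [machineHyp, machineState]⟩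
  · exact (Computable.option_map (Computable.decode.comp Computable.fst)
      (Computable.option_some.comp (hhyp.comp (hδ.comp Computable.snd
        (Computable.snd.comp Computable.fst)))).to₂).ofOption
  · exact (Computable.option_map (Computable.decode.comp Computable.fst)
      (Computable.encode.comp (hδ.comp Computable.snd
        (Computable.snd.comp Computable.fst))).to₂).ofOption

lemma foldl_machineState (σ : List Sig) (s : S) :
    σ.foldl (fun q x => q.bind fun a => machineState δ (a, x)) (Part.some (encode s)) =
      Part.some (encode (σ.foldl δ s)) := by
  induction σ generalizing s with
  | nil => rfl
  | cons x σ ih => simpa [machineState, encodek] using ih (δ s x)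

variable {s₀ : S}

lemma sStar_machineState (h₀ : encode s₀ = 0) (σ : List Sig) :
    sStar (machineState δ) σ = Part.some (encode (σ.foldl δ s₀)) := by
  rw [sStar, ← h₀, foldl_machineState]

lemma bmsLearner_machine_seg_succ (h₀ : encode s₀ = 0) (T : ℕ → Sig) (t : ℕ) :
    bmsLearner (machineHyp δ hyp) (machineState δ) (seg T (t + 1)) =
      Part.some (some (hyp ((seg T (t + 1)).foldl δ s₀))) := by
  rw [seg_succ]
  simp [bmsLearner, sStar_machineState h₀, machineHyp, encodek]

lemma ex_machine_of_eventually_eq (h₀ : encode s₀ = 0) {T : ℕ → Sig} {L : Set ℕ} {s : S}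
    {t₀ : ℕ} (hstab : ∀ t ≥ t₀, (seg T t).foldl δ s₀ = s) (hW : W (hyp s) = L) :
    Ex (bmsLearner (machineHyp δ hyp) (machineState δ)) L T := by
  refine ⟨fun t => ?_, t₀ + 1, hyp s, ?_, hW, fun t ht h hM _ => ?_⟩
  · cases t with
    | zero => simp [bmsLearner, seg]
    | succ t => simp [bmsLearner_machine_seg_succ h₀]
  · rw [outputs, bmsLearner_machine_seg_succ h₀, hstab _ (Nat.le_succ t₀)]
  · obtain ⟨t, rfl⟩ : ∃ t', t = t' + 1 := ⟨t - 1, by omega⟩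
    rw [bmsLearner_machine_seg_succ h₀, hstab _ (by omega)] at hM
    exact (Part.some_inj.1 hM).symm

lemma statesFin_machine_of_finite (h₀ : encode s₀ = 0) {T : ℕ → Sig}
    (hfin : (Set.range fun t => (seg T t).foldl δ s₀).Finite) :
    StatesFin (machineState δ) T := by
  refine (hfin.image encode).subset ?_
  rintro q ⟨t, ht⟩
  rw [sStar_machineState h₀, Part.some_inj] at ht
  exact ⟨_, ⟨t, rfl⟩, ht⟩

end StateMachine

open Encodable Nat.Partrec in
lemma exists_computable_W_eq {α : Type} [Primcodable α] {p : α → ℕ → Prop}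
    (hp : REPred fun q : α × ℕ => p q.1 q.2) :
    ∃ idx : α → ℕ, Computable idx ∧ ∀ a, W (idx a) = {x | p a x} := by
  obtain ⟨c, hc⟩ := Code.exists_code.1 hp
  refine ⟨fun a => encode (Code.curry c (encode a)),
    Computable.encode.comp ((Code.primrec₂_curry.comp (Primrec.const c) Primrec.encode).to_comp),
    fun a => ?_⟩
  ext x
  simp [W, phi, Code.eval_curry, hc, Part.assert]

def evens : Set ℕ := {x | x % 2 = 0}

def evensWithOdd (k : ℕ) : Set ℕ := {x | (x % 2 = 0 ∧ x ≤ 2 * k) ∨ x = 2 * k + 1}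

def evensWithTwoOdds (k : ℕ) : Set ℕ :=
  {x | (x % 2 = 0 ∧ x ≤ 2 * k + 2) ∨ x = 2 * k + 1 ∨ x = 2 * k + 3}

def separatingClass : Set (Set ℕ) :=
  {L | L = evens ∨ ∃ k, L = evensWithOdd k ∨ L = evensWithTwoOdds k}

def oddPart (A : Set ℕ) : Set ℕ := {x ∈ A | x % 2 = 1}

def oddStep (s : Option (ℕ × ℕ)) : Sig → Option (ℕ × ℕ)
  | some x => if x % 2 = 1 then some (s.elim (x, x) fun p => (min x p.1, max x p.2)) else s
  | none => s

def IsMinMax (O : Set ℕ) : Option (ℕ × ℕ) → Prop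
  | none => O = ∅
  | some (a, b) => IsLeast O a ∧ IsGreatest O b

def guess : Option (ℕ × ℕ) → Set ℕ
  | none => evens
  | some (a, b) => {x | (x % 2 = 0 ∧ x < b) ∨ x = a ∨ x = b}

lemma primrec₂_oddStep : Primrec₂ oddStep := by
  have hodd : PrimrecPred fun q : (Option (ℕ × ℕ) × Sig) × ℕ => q.2 % 2 = 1 :=
    Primrec.eq.comp (Primrec.nat_mod.comp Primrec.snd (Primrec.const 2)) (Primrec.const 1)
  have hext : Primrec fun q : (Option (ℕ × ℕ) × Sig) × ℕ =>
      q.1.1.elim (q.2, q.2) fun p => (min q.2 p.1, max q.2 p.2) := by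
    refine (Primrec.option_casesOn (Primrec.fst.comp Primrec.fst)
      (Primrec.pair Primrec.snd Primrec.snd)
      (Primrec.pair
        (Primrec.nat_min.comp (Primrec.snd.comp Primrec.fst) (Primrec.fst.comp Primrec.snd))
        (Primrec.nat_max.comp (Primrec.snd.comp Primrec.fst)
          (Primrec.snd.comp Primrec.snd))).to₂).of_eq ?_
    rintro ⟨⟨_ | p, _⟩, x⟩ <;> rfl
  refine (Primrec.option_casesOn Primrec.snd Primrec.fst
    (Primrec.ite hodd (Primrec.option_some.comp hext) (Primrec.fst.comp Primrec.fst)).to₂).of_eq ?_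
  rintro ⟨s, _ | x⟩ <;> rfl

instance (s : Option (ℕ × ℕ)) : DecidablePred (· ∈ guess s) := fun x =>
  match s with
  | none => inferInstanceAs (Decidable (x % 2 = 0))
  | some (a, b) => inferInstanceAs (Decidable ((x % 2 = 0 ∧ x < b) ∨ x = a ∨ x = b))

lemma rePred_mem_guess : REPred fun q : Option (ℕ × ℕ) × ℕ => q.2 ∈ guess q.1 := by
  have heven : PrimrecPred fun q : Option (ℕ × ℕ) × ℕ => q.2 % 2 = 0 :=
    Primrec.eq.comp (Primrec.nat_mod.comp Primrec.snd (Primrec.const 2)) (Primrec.const 0)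
  have hsome : PrimrecPred fun q : (Option (ℕ × ℕ) × ℕ) × ℕ × ℕ =>
      (q.1.2 % 2 = 0 ∧ q.1.2 < q.2.2) ∨ q.1.2 = q.2.1 ∨ q.1.2 = q.2.2 :=
    .or (.and (heven.comp Primrec.fst)
        (Primrec.nat_lt.comp (Primrec.snd.comp Primrec.fst) (Primrec.snd.comp Primrec.snd)))
      (.or (Primrec.eq.comp (Primrec.snd.comp Primrec.fst) (Primrec.fst.comp Primrec.snd))
        (Primrec.eq.comp (Primrec.snd.comp Primrec.fst) (Primrec.snd.comp Primrec.snd)))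
  refine ComputablePred.to_re (Computable.computablePred ?_)
  refine (Primrec.option_casesOn Primrec.fst heven.decide hsome.decide.to₂).to_comp.of_eq ?_
  rintro ⟨_ | ⟨a, b⟩, x⟩ <;> rfl

namespace IsMinMax

variable {O : Set ℕ} {s : Option (ℕ × ℕ)}

lemma insert (h : IsMinMax O s) (x : ℕ) :
    IsMinMax (insert x O) (some (s.elim (x, x) fun p => (min x p.1, max x p.2))) := by
  match s, h with
  | none, h =>
    rw [show O = ∅ from h, insert_empty_eq]
    exact ⟨isLeast_singleton, isGreatest_singleton⟩
  | some (a, b), h => exact ⟨h.1.insert x, h.2.insert x⟩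

lemma unique {s' : Option (ℕ × ℕ)} (h : IsMinMax O s) (h' : IsMinMax O s') : s = s' := by
  match s, s', h, h' with
  | none, none, _, _ => rfl
  | none, some _, h, h' => exact absurd (h ▸ h'.1.1) (Set.notMem_empty _)
  | some _, none, h, h' => exact absurd (h' ▸ h.1.1) (Set.notMem_empty _)
  | some (_, _), some (_, _), h, h' => rw [h.1.unique h'.1, h.2.unique h'.2]

lemma finite (h : IsMinMax O s) : O.Finite := by
  match s, h with
  | none, h => exact h ▸ Set.finite_empty
  | some (a, b), h => exact (Set.finite_Icc a b).subset fun x hx => ⟨h.1.2 hx, h.2.2 hx⟩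

lemma mem_of_subset {P : Set ℕ} (h : IsMinMax O s) (hOP : O ⊆ P) :
    s ∈ Set.insert none (some '' (P ×ˢ P)) := by
  match s, h with
  | none, _ => exact Set.mem_insert _ _
  | some (a, b), h => exact Or.inr ⟨(a, b), ⟨hOP h.1.1, hOP h.2.1⟩, rfl⟩

end IsMinMax

lemma isMinMax_foldl_oddStep (σ : List Sig) :
    IsMinMax (oddPart (cnt σ)) (σ.foldl oddStep none) := by
  induction σ using List.reverseRecOn with
  | nil => simp [IsMinMax, oddPart, cnt]
  | append_singleton σ x ih =>
    rw [List.foldl_append, List.foldl_cons, List.foldl_nil]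
    rcases x with _ | y
    · simpa [oddStep, oddPart, cnt] using ih
    · by_cases hy : y % 2 = 1
      · have : oddPart (cnt (σ ++ [some y])) = insert y (oddPart (cnt σ)) := by
          ext x; simp [oddPart, cnt]; grind
        simpa [oddStep, hy, this] using ih.insert y
      · have : oddPart (cnt (σ ++ [some y])) = oddPart (cnt σ) := by
          ext x; simp [oddPart, cnt]; grind
        simpa [oddStep, hy, this] using ih

open Encodable in
lemma ex_statesFin_of_isMinMax {hyp : Option (ℕ × ℕ) → ℕ} (hhyp : ∀ s, W (hyp s) = guess s)
    {L : Set ℕ} {s : Option (ℕ × ℕ)} (hs : IsMinMax (oddPart L) s) (hsL : guess s = L)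
    {T : ℕ → Sig} (hT : IsTextFor T L) :
    Ex (bmsLearner (machineHyp oddStep hyp) (machineState oddStep)) L T ∧
      StatesFin (machineState oddStep) T := by
  have h₀ : encode (none : Option (ℕ × ℕ)) = 0 := rfl
  have hsub : ∀ t, oddPart (cnt (seg T t)) ⊆ oddPart L :=
    fun t x hx => ⟨hT.cnt_seg_subset t hx.1, hx.2⟩
  obtain ⟨t₀, ht₀⟩ := hT.exists_subset_cnt_seg hs.finite fun x hx => hx.1
  have hstab : ∀ t ≥ t₀, (seg T t).foldl oddStep none = s := by
    intro t ht
    have hodd : oddPart (cnt (seg T t)) = oddPart L :=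
      (hsub t).antisymm fun x hx => ⟨cnt_seg_mono ht (ht₀ hx), hx.2⟩
    exact (isMinMax_foldl_oddStep _).unique (hodd ▸ hs)
  refine ⟨ex_machine_of_eventually_eq h₀ hstab (hhyp s ▸ hsL), statesFin_machine_of_finite h₀ ?_⟩
  refine (((hs.finite.prod hs.finite).image some).insert none).subset ?_
  exact Set.range_subset_iff.2 fun t => (isMinMax_foldl_oddStep _).mem_of_subset (hsub t)

lemma exists_isMinMax_guess_eq {L : Set ℕ} (hL : L ∈ separatingClass) :
    ∃ s, IsMinMax (oddPart L) s ∧ guess s = L := by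
  rcases hL with rfl | ⟨k, rfl | rfl⟩
  · refine ⟨none, ?_, rfl⟩
    ext x; simp [oddPart, evens]
  · refine ⟨some (2 * k + 1, 2 * k + 1), ⟨⟨?_, fun x hx => ?_⟩, ?_, fun x hx => ?_⟩, ?_⟩ <;>
      (try ext) <;> simp_all [oddPart, evensWithOdd, guess] <;> omega
  · refine ⟨some (2 * k + 1, 2 * k + 3), ⟨⟨?_, fun x hx => ?_⟩, ?_, fun x hx => ?_⟩, ?_⟩ <;>
      (try ext) <;> simp_all [oddPart, evensWithTwoOdds, guess] <;> omega

lemma separatingClass_mem_txtBMSstarEx_triv : separatingClass ∈ TxtBMSstarEx Triv := by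
  obtain ⟨idx, hidx, hW⟩ := exists_computable_W_eq (p := fun s x => x ∈ guess s) rePred_mem_guess
  refine ⟨machineHyp oddStep idx, machineState oddStep,
    bmsPair_machine primrec₂_oddStep.to_comp hidx, fun L hL T hT => ?_⟩
  obtain ⟨s, hs, hsL⟩ := exists_isMinMax_guess_eq hL
  obtain ⟨hex, hfin⟩ := ex_statesFin_of_isMinMax hW hs hsL hT
  exact ⟨hex, hfin, trivial⟩

lemma separatingClass_not_mem_txtBMSstarEx_mon : separatingClass ∉ TxtBMSstarEx Mon := by
  rintro ⟨hf, sf, -, hM⟩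
  refine not_forall_ex_and_mon (Or.inl rfl) (fun D hD hDE => ?_)
    fun L hL T hT => ⟨(hM L hL T hT).1, (hM L hL T hT).2.2⟩
  obtain ⟨k, hk⟩ := hD.bddAbove
  refine ⟨evensWithOdd k, Or.inr ⟨k, Or.inl rfl⟩, evensWithTwoOdds k, Or.inr ⟨k, Or.inr rfl⟩,
    fun x hx => ?_, fun x hx => ?_, fun h => ?_, fun h => ?_⟩
  · have := hk hx; have := hDE hx; simp_all [evensWithOdd, evens]; omega
  · simp_all [evensWithOdd, evensWithTwoOdds]; omega
  · have := h (Or.inr rfl : 2 * k + 1 ∈ evensWithOdd k); simp [evens] at this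
  · have := h (⟨by simp [evens], Or.inl ⟨by omega, le_rfl⟩⟩ :
      2 * k + 2 ∈ evens ∩ evensWithTwoOdds k)
    simp [evensWithOdd] at this

lemma txtBMSstarEx_mono {δ δ' : Learner → (ℕ → Sig) → Prop} (h : ∀ M T, δ M T → δ' M T) :
    TxtBMSstarEx δ ⊆ TxtBMSstarEx δ' := fun _ ⟨hf, sf, hp, hℒ⟩ =>
  ⟨hf, sf, hp, fun L hL T hT => (hℒ L hL T hT).imp_right (And.imp_right (h _ T))⟩

/-- Monotonicity is restrictive for bounded memory states learning
with finitely many states: `[TxtBMS*MonEx] ⊊ [TxtBMS*Ex]`. -/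
theorem txtBMSstar_Mon_ssubset : TxtBMSstarEx Mon ⊂ TxtBMSstarEx Triv :=
  (txtBMSstarEx_mono fun _ _ _ => trivial).ssubset_of_not_subset
    fun h => separatingClass_not_mem_txtBMSstarEx_mon (h separatingClass_mem_txtBMSstarEx_triv)

end BMSLearning
end

section
/- For every learner M and every text T, if M is witness-based on T then M is conservative on T, strongly decisive on T and cautious on T. -/
namespace BMSLearning

/-- Witness-based learning on a text implies conservative, strongly
decisive and cautious learning on that text. -/
theorem wb_implies_conv_sdec_caut (M : Learner) (hM : Partrec M) (T : ℕ → Sig)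
    (h : Wb M T) : Conv M T ∧ SDec M T ∧ Caut M T := by
  have inj : ∀ t (e e' : ℕ), outputs M T t e → outputs M T t e' → e = e' := by
    intro t e e' he he'
    have : Part.some (some e) = Part.some (some e') := he ▸ he'
    simpa using this
  refine ⟨?_, ?_, ?_⟩
  · -- Conv
    intro s t hst es et hes het hsub
    rcases eq_or_lt_of_le hst with rfl | hlt
    · exact inj s es et hes het
    · by_cases hne : M (seg T t) = Part.some (some es)
      · have : Part.some (some es) = Part.some (some et) := hne ▸ het
        simpa using this
      · rcases h s t t hlt le_rfl es et hes het hne with ⟨x, hx1, hx2, hx3⟩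
        exact absurd (hsub hx1) hx3
  · -- SDec
    intro r s t hrs hst er et her het hW
    rcases eq_or_lt_of_le hrs with rfl | hlt
    · exact her
    · by_contra hne
      rcases h r s t hlt hst er et her het hne with ⟨x, _, hx2, hx3⟩
      exact hx3 (hW ▸ hx2)
  · -- Caut
    intro s t hst es et hes het hssub
    rcases eq_or_lt_of_le hst with rfl | hlt
    · have := inj s es et hes het
      subst this
      exact hssub.2 hssub.1
    · by_cases hne : M (seg T t) = Part.some (some es)
      · have : (some es : Hyp) = some et := by
          have : Part.some (some es) = Part.some (some et) := hne ▸ het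
          simpa using this
        have : es = et := by simpa using this
        subst this
        exact hssub.2 hssub.1
      · rcases h s t t hlt le_rfl es et hes het hne with ⟨x, _, hx2, hx3⟩
        exact hx3 (hssub.1 hx2)

end BMSLearning
end
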